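/- Let p be a prime number, let u be a unit of ℤ_p whose residue class modulo p generates (ℤ/pℤ)ˣ, and let i and j be integers such that i − j is not divisible by p − 1. Let M be a finitely generated ℤ_p-module and N any ℤ_p-module. Then every short exact sequence of ℤ_p[T,T⁻¹]-modules 0 → N(j) → E → M(i) → 0 splits: if f : N(j) → E is an injective ℤ_p[T,T⁻¹]-linear map and g : E → M(i) is a surjective ℤ_p[T,T⁻¹]-linear map with image of f equal to the kernel of g, then g admits a ℤ_p[T,T⁻¹]-linear section. -/

import Mathlib

/-! Put `a = u ^ i` and `b = u ^ j`. The Laurent polynomial `r = T - a` kills `M(i)` and acts on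
`N(j)` as multiplication by `b - a`, which is a unit of `ℤ_p` because `u` has order `p - 1`
modulo `p`, so `u ^ i` and `u ^ j` have distinct residues. Hence multiplication by `r` maps `E`
into `ker g = f(N)`, and `(b - a)⁻¹ r` followed by `f⁻¹` is a retraction of `f`; a short exact
sequence whose injection has a retraction splits. -/

/-- Evaluation of a Laurent polynomial over `ℤ_p` at a unit `c ∈ ℤ_pˣ`: the `ℤ_p`-algebra
homomorphism `ℤ_p[T,T⁻¹] → ℤ_p` sending `T` to `c`. -/
noncomputable def LaurentPolynomial.evalUnit (p : ℕ) [Fact p.Prime] (c : ℤ_[p]ˣ) :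
    LaurentPolynomial ℤ_[p] →+* ℤ_[p] :=
  ((AddMonoidAlgebra.lift ℤ_[p] ℤ_[p] ℤ)
    ((Units.coeHom ℤ_[p]).comp (zpowersHom ℤ_[p]ˣ c))).toRingHom

/-- Given a `ℤ_p`-module `N` and a unit `c ∈ ℤ_pˣ`, this is the `ℤ_p[T,T⁻¹]`-module structure
on `N` obtained by restriction of scalars along evaluation at `c`, i.e. `T` acts as
multiplication by `c`.  Taking `c = u ^ i` yields the module denoted `N(i)` in the paper. -/
noncomputable def twistedModule (p : ℕ) [Fact p.Prime] (N : Type*) [AddCommGroup N]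
    [Module ℤ_[p] N] (c : ℤ_[p]ˣ) : Module (LaurentPolynomial ℤ_[p]) N :=
  Module.compHom N (LaurentPolynomial.evalUnit p c)

section Splitting

variable {R M N E : Type*} [CommRing R] [AddCommGroup M] [Module R M] [AddCommGroup N]
  [Module R N] [AddCommGroup E] [Module R E] {f : N →ₗ[R] E} {g : E →ₗ[R] M}

theorem Function.Exact.exists_retraction_of_smul (hfg : Function.Exact f g)
    (hf : Function.Injective f) (r s : R) (hM : ∀ m : M, r • m = 0)
    (hN : ∀ n : N, s • r • n = n) : ∃ π : E →ₗ[R] N, π ∘ₗ f = LinearMap.id := by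
  have hr_mem : ∀ e : E, r • e ∈ LinearMap.range f := fun e ↦
    hfg.linearMap_ker_eq ▸ by simp [hM]
  let φ : E →ₗ[R] LinearMap.range f := (r • LinearMap.id).codRestrict _ hr_mem
  refine ⟨s • ((LinearEquiv.ofInjective f hf).symm : _ →ₗ[R] N) ∘ₗ φ, LinearMap.ext fun n ↦ ?_⟩
  have : φ (f n) = LinearEquiv.ofInjective f hf (r • n) := Subtype.ext (by simp [φ])
  simp [this, hN]

theorem Function.Exact.exists_section_of_smul (hfg : Function.Exact f g)
    (hf : Function.Injective f) (hg : Function.Surjective g) (r s : R) (hM : ∀ m : M, r • m = 0)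
    (hN : ∀ n : N, s • r • n = n) : ∃ l : M →ₗ[R] E, g ∘ₗ l = LinearMap.id :=
  ((hfg.split_tfae hf hg).out 0 1).mpr (hfg.exists_retraction_of_smul hf r s hM hN)

end Splitting

theorem zpow_ne_zpow_of_forall_mem_zpowers {G : Type*} [Group G] [Finite G] {g : G}
    (hg : ∀ x, x ∈ Subgroup.zpowers g) {i j : ℤ} (hij : ¬ (Nat.card G : ℤ) ∣ i - j) :
    g ^ i ≠ g ^ j := by
  rw [Ne, zpow_eq_zpow_iff_modEq, orderOf_eq_card_of_forall_mem_zpowers hg]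
  exact fun h ↦ hij (dvd_sub_comm.mp h.dvd)

namespace PadicInt

variable {p : ℕ} [Fact p.Prime]

theorem isUnit_sub_of_toZMod_ne {x y : ℤ_[p]} (h : toZMod x ≠ toZMod y) : IsUnit (x - y) := by
  by_contra hxy
  have : x - y ∈ RingHom.ker (toZMod : ℤ_[p] →+* ZMod p) := by
    rwa [ker_toZMod, IsLocalRing.mem_maximalIdeal, mem_nonunits_iff]
  exact h (sub_eq_zero.mp (by simpa using this))

theorem isUnit_coe_zpow_sub_coe_zpow {u : ℤ_[p]ˣ}
    (hu : ∀ g : (ZMod p)ˣ, g ∈ Subgroup.zpowers (Units.map (toZMod (p := p)).toMonoidHom u))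
    {i j : ℤ} (hij : ¬ ((p : ℤ) - 1) ∣ (i - j)) :
    IsUnit (((u ^ j : ℤ_[p]ˣ) : ℤ_[p]) - ((u ^ i : ℤ_[p]ˣ) : ℤ_[p])) := by
  have hcard : (Nat.card (ZMod p)ˣ : ℤ) = p - 1 := by
    rw [Nat.card_eq_fintype_card, ZMod.card_units, Nat.cast_sub (Fact.out : p.Prime).one_le,
      Nat.cast_one]
  have hne := zpow_ne_zpow_of_forall_mem_zpowers hu (hcard ▸ hij)
  refine isUnit_sub_of_toZMod_ne fun h ↦ hne (Units.ext ?_)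
  simpa [← map_zpow] using h.symm

end PadicInt

namespace LaurentPolynomial

variable {p : ℕ} [Fact p.Prime]

@[simp]
theorem evalUnit_T (c : ℤ_[p]ˣ) (n : ℤ) : evalUnit p c (T n) = ((c ^ n : ℤ_[p]ˣ) : ℤ_[p]) := by
  rw [evalUnit, T, AlgHom.toRingHom_eq_coe, RingHom.coe_coe, AddMonoidAlgebra.lift_single]
  simp

@[simp]
theorem evalUnit_C (c : ℤ_[p]ˣ) (a : ℤ_[p]) : evalUnit p c (C a) = a := by
  rw [evalUnit, ← single_eq_C, AlgHom.toRingHom_eq_coe, RingHom.coe_coe,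
    AddMonoidAlgebra.lift_single]
  simp

end LaurentPolynomial

open LaurentPolynomial

theorem twistedModule_smul_def {p : ℕ} [Fact p.Prime] {N : Type*} [AddCommGroup N]
    [Module ℤ_[p] N] (c : ℤ_[p]ˣ) (r : LaurentPolynomial ℤ_[p]) (n : N) :
    let _ := twistedModule p N c
    r • n = evalUnit p c r • n :=
  rfl

theorem twisted_ses_splits_general (p : ℕ) [Fact p.Prime] (u : ℤ_[p]ˣ)
    (hu : ∀ g : (ZMod p)ˣ,
      g ∈ Subgroup.zpowers (Units.map (PadicInt.toZMod (p := p)).toMonoidHom u))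
    (i j : ℤ) (hij : ¬ ((p : ℤ) - 1) ∣ (i - j))
    (M : Type) [AddCommGroup M] [Module ℤ_[p] M]
    (N : Type) [AddCommGroup N] [Module ℤ_[p] N]
    (E : Type) [AddCommGroup E] [Module (LaurentPolynomial ℤ_[p]) E] :
    letI : Module (LaurentPolynomial ℤ_[p]) M := twistedModule p M (u ^ i)
    letI : Module (LaurentPolynomial ℤ_[p]) N := twistedModule p N (u ^ j)
    ∀ (f : N →ₗ[LaurentPolynomial ℤ_[p]] E) (g : E →ₗ[LaurentPolynomial ℤ_[p]] M),
      Function.Injective f → Function.Surjective g →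
      LinearMap.range f = LinearMap.ker g →
      ∃ s : M →ₗ[LaurentPolynomial ℤ_[p]] E, g.comp s = LinearMap.id := by
  let _ := twistedModule p M (u ^ i)
  let _ := twistedModule p N (u ^ j)
  intro f g hf hg hfg
  obtain ⟨w, hw⟩ := PadicInt.isUnit_coe_zpow_sub_coe_zpow hu hij
  refine (LinearMap.exact_iff.mpr hfg.symm).exists_section_of_smul hf hg
    (T 1 - C ((u ^ i : ℤ_[p]ˣ) : ℤ_[p])) (C ((w⁻¹ : ℤ_[p]ˣ) : ℤ_[p])) (fun m ↦ ?_) (fun n ↦ ?_)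
  · rw [twistedModule_smul_def]
    simp
  · rw [twistedModule_smul_def, twistedModule_smul_def]
    simp [← hw, smul_smul]

/-- Let `p` be a prime, `u` a unit of `ℤ_p` whose residue modulo `p` generates
`(ℤ/pℤ)ˣ`, and `i, j` integers with `i - j` not divisible by `p - 1`.  Let `M` be a finitely
generated `ℤ_p`-module and `N` any `ℤ_p`-module.  Every short exact sequence of
`ℤ_p[T,T⁻¹]`-modules `0 → N(j) → E → M(i) → 0` splits. -/
theorem twisted_ses_splits (p : ℕ) [Fact p.Prime] (u : ℤ_[p]ˣ)
    (hu : ∀ g : (ZMod p)ˣ,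
      g ∈ Subgroup.zpowers (Units.map (PadicInt.toZMod (p := p)).toMonoidHom u))
    (i j : ℤ) (hij : ¬ ((p : ℤ) - 1) ∣ (i - j))
    (M : Type) [AddCommGroup M] [Module ℤ_[p] M] [Module.Finite ℤ_[p] M]
    (N : Type) [AddCommGroup N] [Module ℤ_[p] N]
    (E : Type) [AddCommGroup E] [Module (LaurentPolynomial ℤ_[p]) E] :
    letI : Module (LaurentPolynomial ℤ_[p]) M := twistedModule p M (u ^ i)
    letI : Module (LaurentPolynomial ℤ_[p]) N := twistedModule p N (u ^ j)
    ∀ (f : N →ₗ[LaurentPolynomial ℤ_[p]] E) (g : E →ₗ[LaurentPolynomial ℤ_[p]] M),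
      Function.Injective f → Function.Surjective g →
      LinearMap.range f = LinearMap.ker g →
      ∃ s : M →ₗ[LaurentPolynomial ℤ_[p]] E, g.comp s = LinearMap.id :=
  twisted_ses_splits_general p u hu i j hij M N E
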